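/- Let M be a finite MDP, let π be a randomized stationary policy with set of recurrent pairs X_π, and let [·] denote the states of the minor M/X_π (so [s] is the communicating component of X_π containing s, or the singleton {s}). Let (S_0, A_0, S_1, A_1, S_2, ...) be any sequence with A_u ∈ A(S_u) and S_{u+1} in the support of p(·|S_u, A_u) for all u, and write X_u := (S_u, A_u). Define N_t(x) := Σ_{u=0}^{t} 1{X_u = x}, N_t(x; s') := Σ_{u=0}^{t−1} 1{X_u = x, S_{u+1} = s'}, and the truncations N'_t(x) := 1{x ∉ X_π}·N_t(x), N'_t(x; s') := 1{x ∉ X_π}·N_t(x; s'). Then for every t ≥ 0 and every state [s] of M/X_π: Σ_{s'∈[s]} Σ_{a∈A(s')} N'_t(s', a) = Σ_{s'∈[s]} Σ_{x∈X} N'_t(x; s') + 1{S_0 ∈ [s]} − 1{X_t ∈ X_π and S_t ∈ [s]}. -/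

import Mathlib

open MeasureTheory ProbabilityTheory Filter Set Asymptotics
open scoped ENNReal NNReal BigOperators Classical

noncomputable section

/-- A finite Markov decision process on state space `S` with pair space `X`.
The map `st : X → S` (fixed externally) assigns to each state-action pair its state;
the action sets `A(s)` are the fibers of `st`. -/
structure MDP (S X : Type) [MeasurableSpace S] where
  /-- transition kernel: `p x` is the distribution of the next state after playing pair `x` -/
  p : X → Measure S
  p_prob : ∀ x, IsProbabilityMeasure (p x)
  /-- reward distribution of the pair `x`, a probability distribution on `[0,1] ⊆ ℝ` -/
  r : X → Measure ℝ
  r_prob : ∀ x, IsProbabilityMeasure (r x)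
  r_supp : ∀ x, r x (Set.Icc (0:ℝ) 1)ᶜ = 0

namespace MDPTheory

variable {S X : Type} [Fintype S] [MeasurableSpace S] [MeasurableSingletonClass S]
  [Fintype X] [MeasurableSpace X] [MeasurableSingletonClass X]

/-- mean reward of pair `x` -/
def rbar (M : MDP S X) (x : X) : ℝ := ∫ t, t ∂(M.r x)

/-- a randomized stationary policy: a probability distribution on the pairs of each fiber -/
def IsPolicy (st : X → S) (π : S → X → ℝ) : Prop :=
  (∀ s x, 0 ≤ π s x) ∧ (∀ s, ∑ x, π s x = 1) ∧ (∀ s x, π s x ≠ 0 → st x = s)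

/-- transition matrix of the Markov chain induced by a stationary policy -/
def polStep (st : X → S) (M : MDP S X) (π : S → X → ℝ) (s s' : S) : ℝ :=
  ∑ x ∈ Finset.univ.filter (fun x => st x = s), π s x * (M.p x {s'}).toReal

/-- `polVal st M π n s` : expected total reward over `n` steps starting from `s`, playing `π` -/
def polVal (st : X → S) (M : MDP S X) (π : S → X → ℝ) : ℕ → S → ℝ
  | 0 => fun _ => 0
  | (n+1) => fun s =>
      (∑ x ∈ Finset.univ.filter (fun x => st x = s), π s x * rbar M x)
        + ∑ s', polStep st M π s s' * polVal st M π n s'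

/-- long-run average reward (gain) of a stationary policy from state `s` -/
def gain (st : X → S) (M : MDP S X) (π : S → X → ℝ) (s : S) : ℝ :=
  atTop.limsup (fun T : ℕ => polVal st M π T s / T)

/-- the optimal gain `g*(M)` -/
def gainOpt (st : X → S) (M : MDP S X) : ℝ :=
  sSup {g : ℝ | ∃ π, IsPolicy st π ∧ ∃ s, g = gain st M π s}

/-- gain-optimal (stationary) policies, membership in `Π*(M)` -/
def GainOptimal (st : X → S) (M : MDP S X) (π : S → X → ℝ) : Prop :=
  IsPolicy st π ∧ ∀ s, gain st M π s = gainOpt st M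

/-- the gap `Δ*(x; M)` of the pair `x`, relative to a bias function `h` -/
def gap (st : X → S) (M : MDP S X) (h : S → ℝ) (x : X) : ℝ :=
  gainOpt st M + h (st x) - rbar M x - ∑ s', (M.p x {s'}).toReal * h s'

/-- `h` is an optimal bias function of `M`: it satisfies the average-reward Bellman
optimality equation `g*(M) + h(s) = max_{x ∈ A(s)} (r(x) + Σ_{s'} p(s'|x) h(s'))`. -/
def IsOptBias (st : X → S) (M : MDP S X) (h : S → ℝ) : Prop :=
  (∀ x, 0 ≤ gap st M h x) ∧ ∀ s, ∃ x, st x = s ∧ gap st M h x = 0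

/-- one-step reachability in `M` (via some pair) -/
def commStep (st : X → S) (M : MDP S X) (s s' : S) : Prop :=
  ∃ x, st x = s ∧ M.p x {s'} ≠ 0

/-- `M` is communicating: every state is reachable from every other state -/
def Communicating (st : X → S) (M : MDP S X) : Prop :=
  ∀ s s', Relation.ReflTransGen (commStep st M) s s'

/-- one-step transition relation of the Markov chain induced by the policy `π` -/
def polRel (st : X → S) (M : MDP S X) (π : S → X → ℝ) (s s' : S) : Prop :=
  ∃ x, st x = s ∧ π s x ≠ 0 ∧ M.p x {s'} ≠ 0

/-- a state is recurrent for the chain induced by `π` iff it communicates back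
with everything it can reach (the standard combinatorial characterization for
finite Markov chains) -/
def recurrentState (st : X → S) (M : MDP S X) (π : S → X → ℝ) (s : S) : Prop :=
  ∀ s', Relation.ReflTransGen (polRel st M π) s s' → Relation.ReflTransGen (polRel st M π) s' s

/-- the recurrent pairs `X_π` of a stationary policy `π` -/
def recurrentPairs (st : X → S) (M : MDP S X) (π : S → X → ℝ) : Set X :=
  {x | recurrentState st M π (st x) ∧ π (st x) x ≠ 0}

/-- the policy playing uniformly among weakly optimal pairs (`gap = 0`) at every state -/
def uniformOpt (st : X → S) (M : MDP S X) (h : S → ℝ) : S → X → ℝ := fun s x =>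
  if st x = s ∧ gap st M h x = 0 then
    (1 : ℝ) / (Finset.univ.filter (fun y => st y = s ∧ gap st M h y = 0)).card
  else 0

/-- the optimal pairs `X*(M)`: recurrent pairs of the uniformly-weakly-optimal policy -/
def optPairs (st : X → S) (M : MDP S X) (h : S → ℝ) : Set X :=
  recurrentPairs st M (uniformOpt st M h)

/-- Kullback-Leibler divergence of two measures -/
def klDiv {α : Type} [MeasurableSpace α] (μ ν : Measure α) : ℝ≥0∞ :=
  if μ ≪ ν ∧ Integrable (llr μ ν) μ then ENNReal.ofReal (∫ z, llr μ ν z ∂μ) else ⊤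

/-- `KL_x(M‖M†) = KL(p(·|x)‖p†(·|x)) + KL(r(·|x)‖r†(·|x))` -/
def KLx (M M' : MDP S X) (x : X) : ℝ≥0∞ :=
  klDiv (M.p x) (M'.p x) + klDiv (M.r x) (M'.r x)

/-- `M† ≫ M` : absolute continuity of kernels and rewards at every pair -/
def Dominates (M' M : MDP S X) : Prop := ∀ x : X, M.p x ≪ M'.p x ∧ M.r x ≪ M'.r x

/-- the alternative set `Alt(M)` -/
def AltSet (st : X → S) (𝕄 : Set (MDP S X)) (M : MDP S X) : Set (MDP S X) :=
  {M' | M' ∈ 𝕄 ∧ Dominates M' M ∧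
    ¬ ∃ π : S → X → ℝ, GainOptimal st M' π ∧ GainOptimal st M π}

/-- the confusing set `Cnf(M)` (relative to the bias function `h` of `M`) -/
def CnfSet (st : X → S) (𝕄 : Set (MDP S X)) (M : MDP S X) (h : S → ℝ) : Set (MDP S X) :=
  {M' | M' ∈ AltSet st 𝕄 M ∧ ∀ x ∈ optPairs st M h, M'.p x = M.p x ∧ M'.r x = M.r x}

/-- invariant measures `Φ(M)` of `M` (as vectors on the pair space) -/
def InvMeasure (st : X → S) (M : MDP S X) (μ : X → ℝ) : Prop :=
  (∀ x, 0 ≤ μ x) ∧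
    ∀ s : S, ∑ x ∈ Finset.univ.filter (fun x => st x = s), μ x
      = ∑ x, μ x * (M.p x {s}).toReal

/-- reachability using only pairs of `X0` -/
def reachIn (st : X → S) (M : MDP S X) (X0 : Set X) (s s' : S) : Prop :=
  Relation.ReflTransGen (fun a b => ∃ x ∈ X0, st x = a ∧ M.p x {b} ≠ 0) s s'

/-- states of the minor `M/X0`: `s` and `s'` are merged iff they lie in a common
communicating component of `X0` -/
def minorEq (st : X → S) (M : MDP S X) (X0 : Set X) (s s' : S) : Prop :=
  s = s' ∨ ((∃ x ∈ X0, st x = s) ∧ (∃ x ∈ X0, st x = s') ∧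
    reachIn st M X0 s s' ∧ reachIn st M X0 s' s)

/-- invariant measures `Φ(M/X0)` of the minor `M/X0`, viewed as vectors indexed by `X`
(for every state `[s]` of the minor, `Σ_a μ([s],a) = Σ_x μ(x)·[p]([s]|x)`). -/
def MinorInvMeasure (st : X → S) (M : MDP S X) (X0 : Set X) (μ : X → ℝ) : Prop :=
  (∀ x, 0 ≤ μ x) ∧
    ∀ s : S, ∑ x ∈ Finset.univ.filter (fun x => minorEq st M X0 (st x) s), μ x
      = ∑ x, μ x * ∑ s' ∈ Finset.univ.filter (fun s' => minorEq st M X0 s' s),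
          (M.p x {s'}).toReal

/-- `X0` is a closed set of pairs: playing pairs of `X0` one remains in the states
spawned by `X0`, and the restriction of `M` to `X0` has no transient states. -/
def IsClosedPairs (st : X → S) (M : MDP S X) (X0 : Set X) : Prop :=
  (∀ x ∈ X0, M.p x {s | ∃ y ∈ X0, st y = s} = 1) ∧
    (∀ s s', (∃ y ∈ X0, st y = s) → reachIn st M X0 s s' → reachIn st M X0 s' s)

/-! ### Learning agents, trajectories and induced laws -/

/-- the pair played at step `n` (`= X_{n+1}` in 1-based time) -/
def pairAt (n : ℕ) (ω : ℕ → X × ℝ) : X := (ω n).1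

/-- the reward received at step `n` (`= R_{n+1}` in 1-based time) -/
def rewAt (n : ℕ) (ω : ℕ → X × ℝ) : ℝ := (ω n).2

/-- the history of the first `n` completed steps -/
def hist (n : ℕ) (ω : ℕ → X × ℝ) : Fin n → X × ℝ := fun i => ω i

/-- A learning agent: a history-dependent randomized policy.  Given the history of the
first `n` steps and the current state, it picks the next pair (measurably), supported on
the pairs of the current state. -/
structure Agent (S X : Type) [MeasurableSpace S] [MeasurableSpace X] (st : X → S) where
  policy : (n : ℕ) → Kernel ((Fin n → X × ℝ) × S) X
  policy_markov : ∀ n, IsMarkovKernel (policy n)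
  policy_supp : ∀ n y s, policy n (y, s) {x | st x = s} = 1

/-- `P` is the law `P^{M,A}_{s0}` of the trajectory of the agent `A` on the MDP `M`
started at `s0`: the first state is `s0`, rewards and next states are generated by `M`,
and pairs are chosen by the policy of `A` given the history and the current state. -/
def IsLawOf (st : X → S) (M : MDP S X) (A : Agent S X st) (s0 : S)
    (P : Measure (ℕ → X × ℝ)) : Prop :=
  IsProbabilityMeasure P ∧
  -- initial step: `S_1 = s0` and `X_1 ~ A.policy 0 (∅, s0)`
  (∀ x : X, P {ω | pairAt 0 ω = x} = A.policy 0 (fun i => i.elim0, s0) {x}) ∧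
  -- environment step: given the history and `X_{n+1}`, the reward `R_{n+1}` has law
  -- `r(·|X_{n+1})` and the next state `S_{n+2}` has law `p(·|X_{n+1})`, independently
  (∀ n : ℕ, ∀ φ : (Fin n → X × ℝ) × X → ℝ≥0∞, Measurable φ →
    ∀ f : ℝ → ℝ≥0∞, Measurable f → ∀ s : S,
    ∫⁻ ω, φ (hist n ω, pairAt n ω) * f (rewAt n ω) *
        (if st (pairAt (n+1) ω) = s then 1 else 0) ∂P
      = ∫⁻ ω, φ (hist n ω, pairAt n ω) * (∫⁻ t, f t ∂(M.r (pairAt n ω))) *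
          (M.p (pairAt n ω) {s}) ∂P) ∧
  -- agent step: given the history and the new state, the next pair is chosen by the policy
  (∀ n : ℕ, ∀ ψ : (Fin (n+1) → X × ℝ) → ℝ≥0∞, Measurable ψ → ∀ x : X,
    ∫⁻ ω, ψ (hist (n+1) ω) * (if pairAt (n+1) ω = x then 1 else 0) ∂P
      = ∫⁻ ω, ψ (hist (n+1) ω) * (if st (pairAt (n+1) ω) = st x then 1 else 0) *
          (A.policy (n+1) (hist (n+1) ω, st x) {x}) ∂P)

/-- the number of visits `N_T(x) = Σ_{t=1}^{T-1} 1{X_t = x}` -/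
def nvis (T : ℕ) (x : X) (ω : ℕ → X × ℝ) : ℕ :=
  ∑ k ∈ Finset.range (T - 1), if pairAt k ω = x then 1 else 0

/-- the regret `Reg(T; M, A, s0) = T·g*(M) − E[Σ_{t=1}^T R_t]` of a trajectory law `P` -/
def regret (st : X → S) (M : MDP S X) (P : Measure (ℕ → X × ℝ)) (T : ℕ) : ℝ :=
  T * gainOpt st M - ∫ ω, (∑ k ∈ Finset.range T, rewAt k ω) ∂P

/-- the agent `A` is consistent on `𝕄`: its regret is `o(T^η)` on every model of `𝕄`,
from every initial state, for every `η > 0` -/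
def Consistent (st : X → S) (𝕄 : Set (MDP S X)) (A : Agent S X st) : Prop :=
  ∀ M' ∈ 𝕄, ∀ s0 : S, ∀ P : Measure (ℕ → X × ℝ), IsLawOf st M' A s0 P →
    ∀ η : ℝ, 0 < η →
      (fun T : ℕ => regret st M' P T) =o[atTop] (fun T : ℕ => (T : ℝ) ^ η)

end MDPTheory

/-!
Write `E u` for the event `S_u ∈ [s]`. A step taken from a recurrent pair never leaves its
communicating component of `X_π`, so `1{E u} = 1{E (u+1)}` whenever `X_u ∈ X_π`. Hence the
time sum of `1{X_u ∉ X_π} (1{E u} - 1{E (u+1)})` telescopes to `1{E 0} - 1{X_t ∈ X_π, E t}`,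
and exchanging the sums over pairs and times turns this into the claimed identity.
-/

namespace MDPTheory

lemma sum_sum_ite_eq_and {α ι : Type*} [DecidableEq α] (s : Finset α) (T : Finset ι)
    (f : ι → α) (Q : ι → Prop) [DecidablePred Q] :
    ∑ x ∈ s, ∑ u ∈ T, (if f u = x ∧ Q u then (1 : ℤ) else 0)
      = ∑ u ∈ T, if f u ∈ s ∧ Q u then 1 else 0 := by
  rw [Finset.sum_comm]
  refine Finset.sum_congr rfl fun u _ => ?_
  simp only [ite_and, Finset.sum_ite_eq]

lemma sum_range_succ_ite_telescope {G : Type*} [AddCommGroup G] (R : ℕ → Prop)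
    [DecidablePred R] (f : ℕ → G) (hf : ∀ u, R u → f (u + 1) = f u) (t : ℕ) :
    ∑ u ∈ Finset.range (t + 1), (if R u then 0 else f u)
      = ∑ u ∈ Finset.range t, (if R u then 0 else f (u + 1)) + f 0
        - if R t then f t else 0 := by
  induction t with
  | zero =>
    simp only [zero_add, Finset.sum_range_one, Finset.range_zero, Finset.sum_empty]
    split_ifs <;> abel
  | succ t ih =>
    rw [Finset.sum_range_succ, ih, Finset.sum_range_succ]
    by_cases hR : R t
    · simp only [hR, if_true, hf t hR]; split_ifs <;> abel
    · simp only [hR, if_false]; split_ifs <;> abel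

section Minor

variable {S X : Type} [MeasurableSpace S] {st : X → S} {M : MDP S X} {X0 : Set X} {a b c : S}

lemma minorEq_symm (h : minorEq st M X0 a b) : minorEq st M X0 b a := by
  rcases h with rfl | ⟨ha, hb, hab, hba⟩
  · exact Or.inl rfl
  · exact Or.inr ⟨hb, ha, hba, hab⟩

lemma minorEq_trans (h : minorEq st M X0 a b) (h' : minorEq st M X0 b c) :
    minorEq st M X0 a c := by
  rcases h with rfl | ⟨ha, hb, hab, hba⟩
  · exact h'
  rcases h' with rfl | ⟨-, hc, hbc, hcb⟩
  · exact Or.inr ⟨ha, hb, hab, hba⟩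
  · exact Or.inr ⟨ha, hc, hab.trans hbc, hcb.trans hba⟩

end Minor

lemma IsPolicy.exists_ne_zero {S X : Type} [Fintype X] {st : X → S} {π : S → X → ℝ}
    (hπ : IsPolicy st π) (s : S) :
    ∃ x, st x = s ∧ π s x ≠ 0 := by
  obtain ⟨x, hx⟩ : ∃ x, π s x ≠ 0 := by
    by_contra! h
    simpa [h] using hπ.2.1 s
  exact ⟨x, hπ.2.2 s x hx, hx⟩

section Recurrence

variable {S X : Type} [MeasurableSpace S] {st : X → S} {M : MDP S X} {π : S → X → ℝ}
  {a b : S}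

lemma recurrentState_of_reflTransGen (ha : recurrentState st M π a)
    (hab : Relation.ReflTransGen (polRel st M π) a b) : recurrentState st M π b :=
  fun _ hbs => (ha _ (hab.trans hbs)).trans hab

lemma reachIn_recurrentPairs_of_reflTransGen (ha : recurrentState st M π a)
    (hab : Relation.ReflTransGen (polRel st M π) a b) :
    reachIn st M (recurrentPairs st M π) a b := by
  induction hab with
  | refl => exact .refl
  | tail hac hcd ih =>
    obtain ⟨x, rfl, hπx, hpx⟩ := hcd
    exact ih.tail ⟨x, ⟨recurrentState_of_reflTransGen ha hac, hπx⟩, rfl, hpx⟩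

lemma minorEq_of_mem_recurrentPairs [Fintype X] (hπ : IsPolicy st π) {x : X}
    (hx : x ∈ recurrentPairs st M π) (hb : M.p x {b} ≠ 0) :
    minorEq st M (recurrentPairs st M π) (st x) b := by
  have hstep : polRel st M π (st x) b := ⟨x, rfl, hx.2, hb⟩
  have hback : Relation.ReflTransGen (polRel st M π) b (st x) := hx.1 b (.single hstep)
  have hb_rec : recurrentState st M π b := recurrentState_of_reflTransGen hx.1 (.single hstep)
  obtain ⟨y, rfl, hπy⟩ := hπ.exists_ne_zero b
  exact Or.inr ⟨⟨x, hx, rfl⟩, ⟨y, ⟨hb_rec, hπy⟩, rfl⟩, .single ⟨x, hx, rfl, hb⟩,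
    reachIn_recurrentPairs_of_reflTransGen hb_rec hback⟩

end Recurrence

end MDPTheory

namespace MDPTheory

variable {S X : Type} [Fintype S] [MeasurableSpace S] [MeasurableSingletonClass S]
  [Fintype X] [MeasurableSpace X] [MeasurableSingletonClass X]

/-- **Quasi-flow property.** Along any admissible trajectory, the truncated visit counts
satisfy, for every state `[s]` of the minor `M/X_π`:
`Σ_{s'∈[s]} Σ_{a∈A(s')} N'_t(s',a) = Σ_{s'∈[s]} Σ_x N'_t(x;s') + 1{S_0 ∈ [s]} − 1{X_t ∈ X_π, S_t ∈ [s]}`. -/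
theorem statement11
    (st : X → S) (M : MDP S X)
    (π : S → X → ℝ) (hπ : IsPolicy st π)
    (xs : ℕ → X) (hxs : ∀ u : ℕ, M.p (xs u) {st (xs (u+1))} ≠ 0)
    (t : ℕ) (s : S) :
    (∑ x ∈ Finset.univ.filter (fun x => x ∉ recurrentPairs st M π ∧
          minorEq st M (recurrentPairs st M π) (st x) s),
        ∑ u ∈ Finset.range (t+1), (if xs u = x then (1:ℤ) else 0))
      = (∑ x ∈ Finset.univ.filter (fun x => x ∉ recurrentPairs st M π),
          ∑ u ∈ Finset.range t,
            (if xs u = x ∧ minorEq st M (recurrentPairs st M π) (st (xs (u+1))) s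
              then (1:ℤ) else 0))
        + (if minorEq st M (recurrentPairs st M π) (st (xs 0)) s then 1 else 0)
        - (if xs t ∈ recurrentPairs st M π ∧
              minorEq st M (recurrentPairs st M π) (st (xs t)) s then 1 else 0) := by
  set R := recurrentPairs st M π
  have hstay : ∀ u, xs u ∈ R →
      (minorEq st M R (st (xs (u + 1))) s ↔ minorEq st M R (st (xs u)) s) := fun u hu =>
    have hnext := minorEq_of_mem_recurrentPairs hπ hu (hxs u)
    ⟨minorEq_trans hnext, minorEq_trans (minorEq_symm hnext)⟩
  have hcount :=
    sum_sum_ite_eq_and (Finset.univ.filter fun x => x ∉ R ∧ minorEq st M R (st x) s)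
      (Finset.range (t + 1)) xs fun _ => True
  simp only [and_true] at hcount
  rw [hcount, sum_sum_ite_eq_and]
  simp only [Finset.mem_filter, Finset.mem_univ, true_and, ite_and, ite_not]
  exact sum_range_succ_ite_telescope (fun u => xs u ∈ R)
    (fun u => if minorEq st M R (st (xs u)) s then 1 else 0)
    (fun u hu => if_congr (hstay u hu) rfl rfl) t

end MDPTheory
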